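/- Fix integers $m \ge 1$, $k \ge 1$, and $n \ge 1$. For $|z| > 0$ not an eigenvalue of $n^{-1/2}\mathcal{Y}_n$, where $\mathcal{Y}_n$ is the $mn \times mn$ block cyclic matrix built from $n \times n$ matrices $X_1, \ldots, X_m$ (block $(k,k+1)$ equal to $X_k$, block $(m,1)$ equal to $X_m$), the top-left $n \times n$ block of the resolvent satisfies $\left((n^{-1/2}\mathcal{Y}_n - zI)^{-1}\right)^{[1,1]} = z^{m-1}\left(n^{-m/2}X_1 \cdots X_m - z^m I\right)^{-1}$, provided $z^m$ is not an eigenvalue of $n^{-m/2}X_1\cdots X_m$. -/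

import Mathlib

open Matrix

/-- The `mn × mn` block cyclic linearization: block `(a, a+1)` (cyclically) is `Xs a`,
all other blocks vanish. -/
def blockCyclic {m n : ℕ} [NeZero m] (Xs : Fin m → Matrix (Fin n) (Fin n) ℂ) :
    Matrix (Fin m × Fin n) (Fin m × Fin n) ℂ :=
  fun p q => if q.1 = p.1 + 1 then Xs p.1 p.2 q.2 else 0

noncomputable def pProd {n : ℕ} (A : ℕ → Matrix (Fin n) (Fin n) ℂ) (k : ℕ) :
    Matrix (Fin n) (Fin n) ℂ :=
  Nat.rec 1 (fun k ih => ih * A k) k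

@[simp] lemma pProd_zero {n : ℕ} (A : ℕ → Matrix (Fin n) (Fin n) ℂ) : pProd A 0 = 1 := rfl

@[simp] lemma pProd_succ {n : ℕ} (A : ℕ → Matrix (Fin n) (Fin n) ℂ) (k : ℕ) :
    pProd A (k+1) = pProd A k * A k := rfl

lemma pProd_succ_left {n : ℕ} (A : ℕ → Matrix (Fin n) (Fin n) ℂ) (k : ℕ) :
    pProd A (k+1) = A 0 * pProd (fun i => A (i+1)) k := by
  induction k with
  | zero => simp
  | succ k ih => rw [pProd_succ, ih, pProd_succ, Matrix.mul_assoc]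

lemma ofFn_prod_eq_pProd {n : ℕ} : ∀ (m : ℕ) (f : Fin m → Matrix (Fin n) (Fin n) ℂ),
    (List.ofFn f).prod = pProd (fun a => if h : a < m then f ⟨a, h⟩ else 1) m := by
  intro m
  induction m with
  | zero => intro f; simp
  | succ m ih =>
    intro f
    rw [List.ofFn_succ, List.prod_cons, ih (fun i => f i.succ), pProd_succ_left]
    have hfn : (fun i => if h : i + 1 < m + 1 then f ⟨i + 1, h⟩ else 1)
        = (fun a => if h : a < m then f (Fin.succ ⟨a, h⟩) else 1) := by
      funext a
      by_cases h : a < m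
      · rw [dif_pos (by omega : a + 1 < m + 1), dif_pos h]
        rfl
      · rw [dif_neg (by omega), dif_neg h]
    rw [hfn, dif_pos (by omega : 0 < m + 1)]
    rfl

lemma pProd_smul {n : ℕ} (c : ℝ) (m : ℕ) (f : Fin m → Matrix (Fin n) (Fin n) ℂ) :
    ∀ k, k ≤ m → pProd (fun a => if h : a < m then c • f ⟨a, h⟩ else 1) k
      = c ^ k • pProd (fun a => if h : a < m then f ⟨a, h⟩ else 1) k := by
  intro k
  induction k with
  | zero => intro _; simp
  | succ k ih =>
    intro hk
    have hkm : k < m := by omega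
    rw [pProd_succ, pProd_succ, ih (by omega), dif_pos hkm, dif_pos hkm, pow_succ,
      smul_mul_assoc, Matrix.mul_smul, smul_smul, mul_comm]

lemma smul_rot0 {n : ℕ} (r : ℝ) (M N K : Matrix (Fin n) (Fin n) ℂ) :
    r • (M * N * K) = M * (N * (r • K)) := by
  rw [Matrix.mul_assoc, ← Matrix.mul_smul, ← Matrix.mul_smul]

lemma smul_rot1 {n : ℕ} (r : ℝ) (w : ℂ) (M N K : Matrix (Fin n) (Fin n) ℂ) :
    r • (w • (M * N) * K) = w • (M * (N * (r • K))) := by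
  rw [smul_mul_assoc, smul_comm r w, smul_rot0]

theorem resolvent_top_left_block {m n : ℕ} [NeZero m]
    (Xs : Fin m → Matrix (Fin n) (Fin n) ℂ)
    (P : Matrix (Fin n) (Fin n) ℂ) (hP : P = (List.ofFn Xs).prod)
    (z : ℂ) (hz : z ≠ 0)
    (h1 : (((Real.sqrt n)⁻¹ : ℝ) • blockCyclic Xs -
        z • (1 : Matrix (Fin m × Fin n) (Fin m × Fin n) ℂ)).det ≠ 0)
    (h2 : ((((Real.sqrt n) ^ m)⁻¹ : ℝ) • P -
        z ^ m • (1 : Matrix (Fin n) (Fin n) ℂ)).det ≠ 0) :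
    ∀ i j : Fin n,
      ((((Real.sqrt n)⁻¹ : ℝ) • blockCyclic Xs -
          z • (1 : Matrix (Fin m × Fin n) (Fin m × Fin n) ℂ))⁻¹) (0, i) (0, j)
        = (z ^ (m - 1) •
            ((((Real.sqrt n) ^ m)⁻¹ : ℝ) • P -
              z ^ m • (1 : Matrix (Fin n) (Fin n) ℂ))⁻¹) i j := by
  obtain ⟨m', rfl⟩ : ∃ m', m = m' + 1 := ⟨m - 1, by have := NeZero.ne m; omega⟩
  intro i j
  set c : ℝ := (Real.sqrt n)⁻¹ with hc
  set Y : Matrix (Fin (m'+1) × Fin n) (Fin (m'+1) × Fin n) ℂ := blockCyclic Xs with hY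
  set B : Matrix (Fin (m'+1) × Fin n) (Fin (m'+1) × Fin n) ℂ := c • Y - z • 1 with hB
  set R : Matrix (Fin n) (Fin n) ℂ :=
    (((Real.sqrt n) ^ (m'+1))⁻¹ : ℝ) • P - z ^ (m'+1) • 1 with hR
  have hBu : IsUnit B.det := isUnit_iff_ne_zero.mpr h1
  have hRu : IsUnit R.det := isUnit_iff_ne_zero.mpr h2
  set A' : ℕ → Matrix (Fin n) (Fin n) ℂ :=
    fun a => if h : a < m' + 1 then c • Xs ⟨a, h⟩ else 1 with hA'
  set u : ℕ → Matrix (Fin n) (Fin n) ℂ :=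
    fun t => z ^ (m' - t) • (R⁻¹ * pProd A' t) with hu
  have hQm : pProd A' (m'+1) = ((((Real.sqrt n) ^ (m'+1))⁻¹ : ℝ)) • P := by
    rw [hA', pProd_smul c (m'+1) Xs (m'+1) le_rfl, ← ofFn_prod_eq_pProd, ← hP, hc, inv_pow]
  -- key recurrence
  have hkey : ∀ q : Fin (m'+1),
      c • (u ((q - 1 : Fin (m'+1))).val * Xs (q - 1)) - z • u q.val
        = if q = 0 then (1 : Matrix (Fin n) (Fin n) ℂ) else 0 := by
    intro q
    by_cases hq : q = 0
    · subst hq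
      rw [if_pos rfl]
      have hval : ((0 - 1 : Fin (m'+1))).val = m' := by
        rw [Fin.coe_sub_one, if_pos rfl]
      have hXlast : Xs (0 - 1 : Fin (m'+1)) = Xs ⟨m', Nat.lt_succ_self m'⟩ :=
        congrArg Xs (Fin.ext (by simpa using hval))
      rw [hu]
      simp only [hval, Fin.val_zero, Nat.sub_self, pow_zero, one_smul, Nat.sub_zero,
        pProd_zero, Matrix.mul_one, hXlast]
      have eA : A' m' = c • Xs ⟨m', Nat.lt_succ_self m'⟩ := dif_pos (Nat.lt_succ_self m')
      have e2 : (z ^ (m' + 1) : ℂ) • R⁻¹ = R⁻¹ * (z ^ (m' + 1) • 1) := by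
        rw [Matrix.mul_smul, Matrix.mul_one]
      calc c • (R⁻¹ * pProd A' m' * Xs ⟨m', Nat.lt_succ_self m'⟩) - z • z ^ m' • R⁻¹
          = R⁻¹ * (pProd A' m' * (c • Xs ⟨m', Nat.lt_succ_self m'⟩))
            - R⁻¹ * (z ^ (m' + 1) • 1) := by
            rw [smul_rot0, smul_smul, ← pow_succ', e2]
        _ = R⁻¹ * R := by
            rw [← eA, ← pProd_succ, hQm, ← Matrix.mul_sub, hR]
        _ = 1 := Matrix.nonsing_inv_mul R hRu
    · rw [if_neg hq]
      have hval : ((q - 1 : Fin (m'+1))).val = q.val - 1 := by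
        rw [Fin.coe_sub_one, if_neg hq]
      obtain ⟨t, ht⟩ : ∃ t, q.val = t + 1 :=
        ⟨q.val - 1, by have : q.val ≠ 0 := fun h => hq (Fin.ext h); omega⟩
      have htm : t < m' + 1 := by have := q.isLt; omega
      have htm' : t < m' := by have := q.isLt; omega
      have hXq : Xs (q - 1) = Xs ⟨t, htm⟩ :=
        congrArg Xs (Fin.ext (by simp [hval, ht]))
      rw [hu]
      simp only [hval, ht, hXq, Nat.add_sub_cancel]
      have eA : A' t = c • Xs ⟨t, htm⟩ := dif_pos htm
      have epow : m' - t = (m' - (t + 1)) + 1 := by omega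
      calc c • (z ^ (m' - t) • (R⁻¹ * pProd A' t) * Xs ⟨t, htm⟩)
            - z • z ^ (m' - (t + 1)) • (R⁻¹ * pProd A' (t + 1))
          = z ^ (m' - t) • (R⁻¹ * (pProd A' t * (c • Xs ⟨t, htm⟩)))
            - z ^ (m' - t) • (R⁻¹ * pProd A' (t + 1)) := by
            rw [smul_rot1, smul_smul, ← pow_succ', ← epow]
        _ = 0 := by rw [← eA, ← pProd_succ, sub_self]
  -- the candidate left block-row inverse
  set U : Matrix (Fin n) (Fin (m'+1) × Fin n) ℂ := fun i pk => u pk.1.val i pk.2 with hU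
  set E : Matrix (Fin n) (Fin (m'+1) × Fin n) ℂ :=
    fun i pk => if pk.1 = 0 then (1 : Matrix (Fin n) (Fin n) ℂ) i pk.2 else 0 with hE
  have hUY : U * Y = fun i qj =>
      (u ((qj.1 - 1 : Fin (m'+1))).val * Xs (qj.1 - 1)) i qj.2 := by
    funext i qj
    obtain ⟨q, j⟩ := qj
    rw [Matrix.mul_apply, Fintype.sum_prod_type]
    have hin : ∀ p : Fin (m'+1),
        (∑ k, U i (p, k) * Y (p, k) (q, j))
          = if p = q - 1 then (u p.val * Xs p) i j else 0 := by
      intro p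
      by_cases hp : p = q - 1
      · have hq : q = p + 1 := by rw [hp, sub_add_cancel]
        rw [if_pos hp]
        simp only [hU, hY, blockCyclic, if_pos hq, Matrix.mul_apply]
      · have hq : ¬ (q = p + 1) := fun h => hp (by rw [h, add_sub_cancel_right])
        rw [if_neg hp]
        simp [hU, hY, blockCyclic, hq]
    rw [Finset.sum_congr rfl (fun p _ => hin p),
      Finset.sum_ite_eq' Finset.univ (q - 1) (fun p => (u p.val * Xs p) i j)]
    simp
  have hUB : U * B = E := by
    have hUBm : U * B = c • (U * Y) - z • U := by
      rw [hB, Matrix.mul_sub, Matrix.mul_smul, Matrix.mul_smul, Matrix.mul_one]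
    rw [hUBm, hUY]
    funext i qj
    obtain ⟨q, j⟩ := qj
    have hk := congrFun (congrFun (hkey q) i) j
    simp only [Matrix.sub_apply, Matrix.smul_apply] at hk ⊢
    rw [hE]
    by_cases hq : q = 0
    · simp only [hq, if_pos rfl] at hk ⊢
      exact hk
    · simp only [hq, if_neg hq] at hk ⊢
      exact hk
  have hEB : E * B⁻¹ = U := by
    rw [← hUB, Matrix.mul_assoc, Matrix.mul_nonsing_inv _ hBu, Matrix.mul_one]
  have hentry := congrFun (congrFun hEB i) ((0 : Fin (m'+1)), j)
  have hL : (E * B⁻¹) i ((0 : Fin (m'+1)), j) = B⁻¹ (0, i) (0, j) := by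
    rw [Matrix.mul_apply, Fintype.sum_prod_type]
    simp [hE, Matrix.one_apply, ite_mul, zero_mul]
  have hRight : U i ((0 : Fin (m'+1)), j) = (z ^ m' • R⁻¹) i j := by
    simp [hU, hu]
  rw [hL] at hentry
  rw [hentry, hRight]
  simp
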